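/- arXiv:1311.1652 — 6 statements merged into one kernel-verified Lean document; each statement's English description precedes it below -/
import Mathlib

section
/- Let P be a positive integer, i an index in {1,…,P}, and f : (Fin P → ℝ) → ℝ a function that is Lipschitz with constant L ≥ 0 (with respect to the sup norm on Fin P → ℝ) and quasi-positive in coordinate i, meaning f(y) ≥ 0 whenever y is componentwise nonnegative and y_i = 0. Then for every componentwise nonnegative y with 0 < y_i ≤ 1, one has f(y)·log(y_i) ≤ L/e. -/
open Real

lemma neg_mul_log_le_inv_exp {x : ℝ} (hx : 0 < x) : x * (-Real.log x) ≤ 1 / Real.exp 1 := by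
  have h1 : -Real.log x = Real.log (1 / x) := by
    rw [Real.log_div one_ne_zero hx.ne', Real.log_one]; ring
  have h2 : Real.log (1 / x) ≤ (1 / x) / Real.exp 1 := by
    have h := Real.add_one_le_exp (Real.log (1 / x) - 1)
    rw [Real.exp_sub, Real.exp_log (by positivity)] at h
    linarith
  calc x * (-Real.log x) = x * Real.log (1 / x) := by rw [h1]
    _ ≤ x * ((1 / x) / Real.exp 1) := mul_le_mul_of_nonneg_left h2 hx.le
    _ = 1 / Real.exp 1 := by field_simp

/-- If `f : (Fin P → ℝ) → ℝ` is Lipschitz with constant `L ≥ 0` (for the sup norm) and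
quasi-positive in coordinate `i` (i.e. `f y ≥ 0` whenever `y` is componentwise nonnegative
with `y i = 0`), then for every componentwise nonnegative `y` with `0 < y i ≤ 1` one has
`f(y)·log(y i) ≤ L / e`. -/
theorem quasiPositive_mul_log_le (P : ℕ) (hP : 0 < P) (i : Fin P) (L : ℝ) (hL : 0 ≤ L)
    (f : (Fin P → ℝ) → ℝ)
    (hf_lip : LipschitzWith (Real.toNNReal L) f)
    (hf_qp : ∀ y : Fin P → ℝ, (∀ j, 0 ≤ y j) → y i = 0 → 0 ≤ f y) :
    ∀ y : Fin P → ℝ, (∀ j, 0 ≤ y j) → 0 < y i → y i ≤ 1 →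
      f y * Real.log (y i) ≤ L / Real.exp 1 := by
  intro y hy hyi hyi1
  set y' : Fin P → ℝ := Function.update y i 0 with hy'def
  have hy'nn : ∀ j, 0 ≤ y' j := by
    intro j
    by_cases h : j = i
    · simp [hy'def, h]
    · simp [hy'def, Function.update_of_ne h]; exact hy j
  have hfy' : 0 ≤ f y' := hf_qp y' hy'nn (by simp [hy'def])
  have hdist : dist y y' ≤ y i := by
    rw [dist_pi_le_iff hyi.le]
    intro j
    by_cases h : j = i
    · subst h; simp [hy'def, Real.dist_eq, abs_of_nonneg (hy j)]
    · simp [hy'def, Function.update_of_ne h]; exact hyi.le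
  have hlip : dist (f y) (f y') ≤ L * y i := by
    calc dist (f y) (f y') ≤ (Real.toNNReal L : ℝ) * dist y y' := hf_lip.dist_le_mul y y'
      _ ≤ L * y i := by
          rw [Real.coe_toNNReal L hL]
          exact mul_le_mul_of_nonneg_left hdist hL
  have hlow : -f y ≤ L * y i := by
    have := abs_sub_le_iff.mp (Real.dist_eq (f y) (f y') ▸ hlip)
    linarith [this.2]
  have hlog : Real.log (y i) ≤ 0 := Real.log_nonpos hyi.le hyi1
  rcases le_or_gt 0 (f y) with hpos | hneg
  · have : f y * Real.log (y i) ≤ 0 := mul_nonpos_of_nonneg_of_nonpos hpos hlog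
    have : (0:ℝ) ≤ L / Real.exp 1 := by positivity
    linarith
  · have key : y i * (-Real.log (y i)) ≤ 1 / Real.exp 1 := neg_mul_log_le_inv_exp hyi
    have h1 : f y * Real.log (y i) = (-f y) * (-Real.log (y i)) := by ring
    have h2 : (-f y) * (-Real.log (y i)) ≤ (L * y i) * (-Real.log (y i)) :=
      mul_le_mul_of_nonneg_right hlow (by linarith)
    have h3 : (L * y i) * (-Real.log (y i)) = L * (y i * (-Real.log (y i))) := by ring
    have h4 : L * (y i * (-Real.log (y i))) ≤ L * (1 / Real.exp 1) :=
      mul_le_mul_of_nonneg_left key hL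
    calc f y * Real.log (y i) = (-f y) * (-Real.log (y i)) := h1
      _ ≤ L * (y i * (-Real.log (y i))) := by linarith
      _ ≤ L * (1 / Real.exp 1) := h4
      _ = L / Real.exp 1 := by ring
end

section
/- For every real number p > 1 there exists a constant C > 0, depending only on p, such that for every η ∈ (0,1] and every r ≥ 1: log r + (η·p/(p−1))·r^{p−1} ≤ C·(1 + ψ_η(r)), where ψ_η(r) = r·log r − r + 1 + (η/(p−1))·r^p. -/
open Real

lemma key_ineq (r : ℝ) (hr : 1 ≤ r) : r - 2 ≤ (r - 1) * Real.log r := by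
  have hlog0 : 0 ≤ Real.log r := Real.log_nonneg hr
  rcases le_or_gt r 2 with h2 | h2
  · nlinarith
  · rcases le_or_gt r 3 with h3 | h3
    · have hl2 : (1 : ℝ) / 2 ≤ Real.log r := by
        have := Real.log_two_gt_d9
        have hmono : Real.log 2 ≤ Real.log r := Real.log_le_log (by norm_num) h2.le
        linarith
      nlinarith
    · have hl3 : (1 : ℝ) ≤ Real.log r := by
        have h1 : Real.exp 1 ≤ r := by
          have := Real.exp_one_lt_d9
          linarith
        calc (1 : ℝ) = Real.log (Real.exp 1) := (Real.log_exp 1).symm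
          _ ≤ Real.log r := Real.log_le_log (Real.exp_pos 1) h1
      nlinarith

/-- For every `p > 1` there is a constant `C > 0` depending only on `p` such that for all
`η ∈ (0,1]` and all `r ≥ 1`:
`log r + (η·p/(p−1))·r^(p−1) ≤ C·(1 + ψ_η(r))`, where
`ψ_η(r) = r·log r − r + 1 + (η/(p−1))·r^p`. -/
theorem psi_deriv_growth_bound (p : ℝ) (hp : 1 < p) :
    ∃ C : ℝ, 0 < C ∧ ∀ η : ℝ, η ∈ Set.Ioc (0 : ℝ) 1 → ∀ r : ℝ, 1 ≤ r →
      Real.log r + (η * p / (p - 1)) * r ^ (p - 1) ≤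
        C * (1 + (r * Real.log r - r + 1 + (η / (p - 1)) * r ^ p)) := by
  refine ⟨p + 1, by linarith, ?_⟩
  rintro η ⟨hη0, hη1⟩ r hr
  have hp1 : (0 : ℝ) < p - 1 := by linarith
  have hr0 : (0 : ℝ) < r := by linarith
  have hlog0 : 0 ≤ Real.log r := Real.log_nonneg hr
  -- A := r * log r - r + 1 ≥ 0
  have hA : 0 ≤ r * Real.log r - r + 1 := by
    have h := Real.log_le_sub_one_of_pos (show (0:ℝ) < 1 / r by positivity)
    rw [Real.log_div one_ne_zero (ne_of_gt hr0), Real.log_one] at h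
    have : 1 - 1 / r ≤ Real.log r := by linarith
    have h2 : r * (1 - 1 / r) ≤ r * Real.log r := by
      exact mul_le_mul_of_nonneg_left this (le_of_lt hr0)
    have h3 : r * (1 - 1 / r) = r - 1 := by field_simp
    linarith
  -- B := (η/(p-1)) * r^p ≥ 0
  have hrp : (0 : ℝ) ≤ r ^ p := Real.rpow_nonneg (le_of_lt hr0) p
  have hB : 0 ≤ (η / (p - 1)) * r ^ p := by positivity
  -- log r ≤ 1 + A
  have hlogA : Real.log r ≤ 1 + (r * Real.log r - r + 1) := by
    have := key_ineq r hr
    nlinarith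
  -- second term ≤ p * B
  have hpow : r ^ (p - 1) ≤ r ^ p :=
    Real.rpow_le_rpow_of_exponent_le hr (by linarith)
  have hsecond : (η * p / (p - 1)) * r ^ (p - 1) ≤ p * ((η / (p - 1)) * r ^ p) := by
    have h1 : (η * p / (p - 1)) * r ^ (p - 1) = p * ((η / (p - 1)) * r ^ (p - 1)) := by
      ring
    rw [h1]
    have : (η / (p - 1)) * r ^ (p - 1) ≤ (η / (p - 1)) * r ^ p := by
      apply mul_le_mul_of_nonneg_left hpow
      positivity
    nlinarith [hp.le]
  nlinarith [mul_nonneg (le_of_lt hp1) hA, mul_nonneg (show (0:ℝ) ≤ p by linarith) hA,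
    mul_nonneg (show (0:ℝ) ≤ p by linarith) hB]
end

section
/- Let P be a positive integer, i an index in {1,…,P}, p > 1 a real number, and f : (Fin P → ℝ) → ℝ a function with |f(y)| ≤ K for all y, Lipschitz with constant L ≥ 0 (with respect to the sup norm), and quasi-positive in coordinate i (f(y) ≥ 0 whenever y is componentwise nonnegative and y_i = 0). Then there exists a constant C > 0, depending only on p, K and L, such that for every η ∈ (0,1] and every componentwise nonnegative y with y_i > 0: f(y)·(log(y_i) + (η·p/(p−1))·y_i^{p−1}) ≤ C·(1 + ψ_η(y_i)), where ψ_η(r) = r·log r − r + 1 + (η/(p−1))·r^p. -/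
open Real

set_option maxHeartbeats 1600000 in
/-- If `f : (Fin P → ℝ) → ℝ` is bounded by `K`, Lipschitz with constant `L ≥ 0` (sup norm),
and quasi-positive in coordinate `i`, then for `p > 1` there is a constant `C > 0`, depending
only on `p`, `K`, `L`, such that for every `η ∈ (0,1]` and every componentwise nonnegative `y`
with `y i > 0`:
`f(y)·(log(y i) + (η·p/(p−1))·(y i)^(p−1)) ≤ C·(1 + ψ_η(y i))`, where
`ψ_η(r) = r·log r − r + 1 + (η/(p−1))·r^p`. -/
theorem reaction_entropy_estimate (P : ℕ) (hP : 0 < P) (i : Fin P) (p K L : ℝ)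
    (hp : 1 < p) (hL : 0 ≤ L) (f : (Fin P → ℝ) → ℝ)
    (hf_bdd : ∀ y : Fin P → ℝ, |f y| ≤ K)
    (hf_lip : LipschitzWith (Real.toNNReal L) f)
    (hf_qp : ∀ y : Fin P → ℝ, (∀ j, 0 ≤ y j) → y i = 0 → 0 ≤ f y) :
    ∃ C : ℝ, 0 < C ∧ ∀ η : ℝ, η ∈ Set.Ioc (0 : ℝ) 1 →
      ∀ y : Fin P → ℝ, (∀ j, 0 ≤ y j) → 0 < y i →
        f y * (Real.log (y i) + (η * p / (p - 1)) * (y i) ^ (p - 1)) ≤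
          C * (1 + ((y i) * Real.log (y i) - (y i) + 1 + (η / (p - 1)) * (y i) ^ p)) := by
  have hK : 0 ≤ K := (abs_nonneg (f 0)).trans (hf_bdd 0)
  have hp1 : (0:ℝ) < p - 1 := by linarith
  have hp0 : (0:ℝ) < p := by linarith
  have hE : (0:ℝ) < Real.exp 2 := Real.exp_pos 2
  have hE1 : (1:ℝ) ≤ Real.exp 2 := Real.one_le_exp (by norm_num)
  have hB : (0:ℝ) ≤ p ^ p / (p - 1) := by positivity
  have hD : (0:ℝ) ≤ p / (p - 1) := by positivity
  set A : ℝ := Real.exp 2 + p ^ p / (p - 1) + p / (p - 1) + 1 with hA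
  have hApos : (0:ℝ) < A := by rw [hA]; positivity
  have hA1 : (1:ℝ) ≤ A := by rw [hA]; linarith
  have hMpos : (0:ℝ) < K + L + 1 := by linarith
  refine ⟨(K + L + 1) * A, by positivity, ?_⟩
  rintro η ⟨hη0, hη1⟩ y hy hyi
  set x := y i with hxdef
  have hx0 : (0:ℝ) ≤ x := hyi.le
  have ht : 0 ≤ η / (p - 1) * x ^ p := by positivity
  -- basic entropy inequality : x * (-log x) ≤ 1 - x
  have h4 : x * (-Real.log x) ≤ 1 - x := by
    have h1 : Real.log x⁻¹ ≤ x⁻¹ - 1 := Real.log_le_sub_one_of_pos (by positivity)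
    rw [Real.log_inv] at h1
    have h2 : x * (-Real.log x) ≤ x * (x⁻¹ - 1) := mul_le_mul_of_nonneg_left h1 hx0
    have h3 : x * x⁻¹ = 1 := mul_inv_cancel₀ hyi.ne'
    nlinarith
  have hψ0 : 0 ≤ x * Real.log x - x + 1 := by nlinarith
  have hψ : 0 ≤ x * Real.log x - x + 1 + η / (p - 1) * x ^ p := by linarith
  by_cases hx1 : 1 ≤ x
  · -- case x ≥ 1
    have hlognn : 0 ≤ Real.log x := Real.log_nonneg hx1
    have hτnn : 0 ≤ η * p / (p - 1) * x ^ (p - 1) := by positivity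
    have hφnn : 0 ≤ Real.log x + η * p / (p - 1) * x ^ (p - 1) := by linarith
    have hfK : f y ≤ K := (le_abs_self _).trans (hf_bdd y)
    have h1 : f y * (Real.log x + η * p / (p - 1) * x ^ (p - 1)) ≤
        K * (Real.log x + η * p / (p - 1) * x ^ (p - 1)) :=
      mul_le_mul_of_nonneg_right hfK hφnn
    have hlx : Real.log x ≤ x - 1 := Real.log_le_sub_one_of_pos hyi
    -- bound on the logarithm
    have hlog : Real.log x ≤ Real.exp 2 * (1 + (x * Real.log x - x + 1)) := by
      by_cases h2 : x ≤ Real.exp 2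
      · nlinarith [mul_nonneg hE.le hψ0]
      · push_neg at h2
        have h3 : (2:ℝ) ≤ Real.log x := (Real.le_log_iff_exp_le hyi).mpr h2.le
        have h5 : 0 ≤ x * (Real.log x - 2) := mul_nonneg hx0 (by linarith)
        nlinarith [mul_nonneg (by linarith : (0:ℝ) ≤ Real.exp 2 - 1) hψ0]
    -- bound on the power term
    have hpow : η * p / (p - 1) * x ^ (p - 1) ≤ p ^ p / (p - 1) + η / (p - 1) * x ^ p := by
      by_cases h2 : x ≤ p
      · have h3 : x ^ (p - 1) ≤ p ^ (p - 1) := Real.rpow_le_rpow hx0 h2 (by linarith)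
        have h4' : p ^ (p - 1) * p = p ^ p := by
          rw [← Real.rpow_add_one hp0.ne' (p - 1)]; norm_num
        have hx9 : 0 ≤ x ^ (p - 1) := Real.rpow_nonneg hx0 _
        have hη2 : η * p / (p - 1) ≤ p / (p - 1) := by
          gcongr
          nlinarith
        have h5 : η * p / (p - 1) * x ^ (p - 1) ≤ p / (p - 1) * x ^ (p - 1) :=
          mul_le_mul_of_nonneg_right hη2 hx9
        have h6 : p / (p - 1) * x ^ (p - 1) ≤ p / (p - 1) * p ^ (p - 1) :=
          mul_le_mul_of_nonneg_left h3 hD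
        have h7 : p / (p - 1) * p ^ (p - 1) = p ^ p / (p - 1) := by
          rw [← h4']; ring
        linarith
      · push_neg at h2
        have h6 : x ^ (p - 1) * x = x ^ p := by
          rw [← Real.rpow_add_one hyi.ne' (p - 1)]; norm_num
        have hx9 : 0 ≤ x ^ (p - 1) := Real.rpow_nonneg hx0 _
        have h7 : p * x ^ (p - 1) ≤ x ^ p := by nlinarith
        have h8 : η / (p - 1) * (p * x ^ (p - 1)) ≤ η / (p - 1) * x ^ p :=
          mul_le_mul_of_nonneg_left h7 (by positivity)
        have heq : η * p / (p - 1) * x ^ (p - 1) = η / (p - 1) * (p * x ^ (p - 1)) := by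
          ring
        rw [heq]
        linarith
    have hcomb : Real.exp 2 * (1 + (x * Real.log x - x + 1)) +
        (p ^ p / (p - 1) + η / (p - 1) * x ^ p) ≤
        A * (1 + (x * Real.log x - x + 1 + η / (p - 1) * x ^ p)) := by
      rw [hA]
      nlinarith [mul_nonneg hB hψ0, mul_nonneg hB ht, mul_nonneg hD hψ0, mul_nonneg hD ht,
        mul_nonneg hE.le ht]
    have h9 : K * (Real.log x + η * p / (p - 1) * x ^ (p - 1)) ≤
        K * (A * (1 + (x * Real.log x - x + 1 + η / (p - 1) * x ^ p))) :=
      mul_le_mul_of_nonneg_left (by linarith) hK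
    have h10 : K * (A * (1 + (x * Real.log x - x + 1 + η / (p - 1) * x ^ p))) ≤
        (K + L + 1) * A * (1 + (x * Real.log x - x + 1 + η / (p - 1) * x ^ p)) := by
      have hfac : 0 ≤ A * (1 + (x * Real.log x - x + 1 + η / (p - 1) * x ^ p)) := by
        apply mul_nonneg hApos.le; linarith
      nlinarith [mul_nonneg (by linarith : (0:ℝ) ≤ L + 1) hfac]
    calc f y * (Real.log x + η * p / (p - 1) * x ^ (p - 1)) ≤
        K * (Real.log x + η * p / (p - 1) * x ^ (p - 1)) := h1
      _ ≤ K * (A * (1 + (x * Real.log x - x + 1 + η / (p - 1) * x ^ p))) := h9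
      _ ≤ (K + L + 1) * A * (1 + (x * Real.log x - x + 1 + η / (p - 1) * x ^ p)) := h10
  · -- case x < 1
    push_neg at hx1
    have hlognp : Real.log x ≤ 0 := Real.log_nonpos hx0 hx1.le
    have hxp1 : x ^ (p - 1) ≤ 1 := Real.rpow_le_one hx0 hx1.le (by linarith)
    have hx9 : 0 ≤ x ^ (p - 1) := Real.rpow_nonneg hx0 _
    have hτ0 : 0 ≤ η * p / (p - 1) * x ^ (p - 1) := by positivity
    have hτle : η * p / (p - 1) * x ^ (p - 1) ≤ p / (p - 1) := by
      have h1 : η * p / (p - 1) * x ^ (p - 1) ≤ η * p / (p - 1) * 1 :=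
        mul_le_mul_of_nonneg_left hxp1 (by positivity)
      have h2 : η * p / (p - 1) ≤ p / (p - 1) := by
        gcongr
        nlinarith
      rw [mul_one] at h1
      linarith
    have hone : (1:ℝ) ≤ 1 + (x * Real.log x - x + 1 + η / (p - 1) * x ^ p) := by linarith
    by_cases hφ : 0 ≤ Real.log x + η * p / (p - 1) * x ^ (p - 1)
    · -- nonnegative derivative: use |f| ≤ K
      have hfK : f y ≤ K := (le_abs_self _).trans (hf_bdd y)
      have h1 : f y * (Real.log x + η * p / (p - 1) * x ^ (p - 1)) ≤
          K * (Real.log x + η * p / (p - 1) * x ^ (p - 1)) :=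
        mul_le_mul_of_nonneg_right hfK hφ
      have h2 : K * (Real.log x + η * p / (p - 1) * x ^ (p - 1)) ≤ K * (p / (p - 1)) :=
        mul_le_mul_of_nonneg_left (by linarith) hK
      have h3 : K * (p / (p - 1)) ≤ (K + L + 1) * A := by
        have hAD : p / (p - 1) ≤ A := by rw [hA]; linarith
        nlinarith [mul_nonneg hK (by linarith : (0:ℝ) ≤ A - p / (p - 1)),
          mul_nonneg (by linarith : (0:ℝ) ≤ L + 1) hApos.le]
      have h5 : (K + L + 1) * A ≤ (K + L + 1) * A *
          (1 + (x * Real.log x - x + 1 + η / (p - 1) * x ^ p)) := by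
        nlinarith [mul_nonneg (mul_nonneg hMpos.le hApos.le) hψ]
      linarith
    · -- negative derivative: use quasi-positivity and Lipschitz bound f y ≥ -L x
      push_neg at hφ
      have hfy_lb : -(L * x) ≤ f y := by
        set y' := Function.update y i 0 with hy'def
        have hy'nn : ∀ j, 0 ≤ y' j := by
          intro j
          rw [hy'def, Function.update_apply]
          split_ifs with h
          · exact le_refl 0
          · exact hy j
        have h0 : y' i = 0 := Function.update_self i 0 y
        have hf0 : 0 ≤ f y' := hf_qp y' hy'nn h0
        have hdist : dist y y' ≤ x := by
          rw [dist_pi_le_iff hx0]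
          intro j
          rw [hy'def, Function.update_apply]
          split_ifs with h
          · subst h; rw [Real.dist_eq, sub_zero, abs_of_nonneg hx0]
          · simpa using hx0
        have hlip := hf_lip.dist_le_mul y y'
        rw [Real.coe_toNNReal L hL] at hlip
        have habs : |f y - f y'| ≤ L * x := by
          rw [← Real.dist_eq]
          exact hlip.trans (mul_le_mul_of_nonneg_left hdist hL)
        have := (abs_le.mp habs).1
        linarith
      have hstep : f y * (Real.log x + η * p / (p - 1) * x ^ (p - 1)) ≤
          -(L * x) * (Real.log x + η * p / (p - 1) * x ^ (p - 1)) :=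
        mul_le_mul_of_nonpos_right hfy_lb hφ.le
      have h5 : -(L * x) * (Real.log x + η * p / (p - 1) * x ^ (p - 1)) ≤ L := by
        have h6 : L * (x * (-Real.log x)) ≤ L * (1 - x) := mul_le_mul_of_nonneg_left h4 hL
        have h7 : 0 ≤ L * x * (η * p / (p - 1) * x ^ (p - 1)) :=
          mul_nonneg (mul_nonneg hL hx0) hτ0
        have h8 : 0 ≤ L * x := mul_nonneg hL hx0
        nlinarith
      have h9 : L ≤ (K + L + 1) * A *
          (1 + (x * Real.log x - x + 1 + η / (p - 1) * x ^ p)) := by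
        have h10 : (K + L + 1) * 1 ≤ (K + L + 1) * A :=
          mul_le_mul_of_nonneg_left hA1 hMpos.le
        nlinarith [mul_nonneg (mul_nonneg hMpos.le hApos.le) hψ]
      linarith
end

section
/- Let (Ω, μ) be a finite measure space, p > 1 a real number, C ≥ 0, (c_n) a sequence of measurable functions c_n : Ω → [0,∞), and (η_n) a sequence in (0,1] with η_n → 0, such that η_n·∫_Ω c_n^p dμ ≤ C for every n. Then η_n·∫_Ω c_n^{p−1/2} dμ → 0 as n → ∞. More precisely, η_n·∫_Ω c_n^{p−1/2} dμ ≤ C^{(2p−1)/(2p)}·η_n^{1/(2p)}·μ(Ω)^{1/(2p)}. -/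
open MeasureTheory Real Filter

/-! Writing `c^(p-1/2) = (c^p)^θ` with `θ = (2p-1)/(2p)`, Hölder's inequality for the weighted
measure `η • μ` gives `η ∫ c^(p-1/2) ≤ (η ∫ c^p)^θ (η μ(Ω))^(1-θ) ≤ C^θ η^(1/(2p)) μ(Ω)^(1/(2p))`,
and the right-hand side tends to zero with `η`. -/

namespace MeasureTheory

variable {α : Type*} [MeasurableSpace α] (μ : Measure α)

theorem lintegral_rpow_le_rpow_lintegral_mul_measure_univ {f : α → ENNReal}
    (hf : AEMeasurable f μ) {θ : ℝ} (hθ₀ : 0 ≤ θ) (hθ₁ : θ ≤ 1) :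
    ∫⁻ x, f x ^ θ ∂μ ≤ (∫⁻ x, f x ∂μ) ^ θ * μ Set.univ ^ (1 - θ) := by
  simpa using ENNReal.lintegral_mul_norm_pow_le hf aemeasurable_const hθ₀ (sub_nonneg.2 hθ₁)
    (add_sub_cancel θ 1) (g := 1)

theorem ofReal_mul_lintegral_rpow_le {f : α → ℝ} (hf : Measurable f) (hf₀ : ∀ x, 0 ≤ f x)
    {p q C η : ℝ} (hq : 0 < q) (hqp : q ≤ p) (hC : 0 ≤ C) (hη : 0 ≤ η)
    (hbound : ENNReal.ofReal η * ∫⁻ x, ENNReal.ofReal (f x ^ p) ∂μ ≤ ENNReal.ofReal C) :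
    ENNReal.ofReal η * ∫⁻ x, ENNReal.ofReal (f x ^ q) ∂μ ≤
      ENNReal.ofReal (C ^ (q / p) * η ^ (1 - q / p)) * μ Set.univ ^ (1 - q / p) := by
  set θ := q / p
  have hp : 0 < p := hq.trans_le hqp
  have hθ₀ : 0 ≤ θ := (div_pos hq hp).le
  have hθ₁ : θ ≤ 1 := div_le_one_of_le₀ hqp hp.le
  have hpow : ∀ x, ENNReal.ofReal (f x ^ q) = ENNReal.ofReal (f x ^ p) ^ θ := fun x => by
    rw [ENNReal.ofReal_rpow_of_nonneg (rpow_nonneg (hf₀ x) p) hθ₀, ← rpow_mul (hf₀ x),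
      mul_div_cancel₀ q hp.ne']
  have hmeas : AEMeasurable (fun x => ENNReal.ofReal (f x ^ p)) (ENNReal.ofReal η • μ) :=
    (hf.pow_const p).ennreal_ofReal.aemeasurable
  calc ENNReal.ofReal η * ∫⁻ x, ENNReal.ofReal (f x ^ q) ∂μ
      = ∫⁻ x, ENNReal.ofReal (f x ^ p) ^ θ ∂(ENNReal.ofReal η • μ) := by
        simp only [hpow, lintegral_smul_measure, smul_eq_mul]
    _ ≤ (∫⁻ x, ENNReal.ofReal (f x ^ p) ∂(ENNReal.ofReal η • μ)) ^ θ *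
          (ENNReal.ofReal η • μ) Set.univ ^ (1 - θ) :=
        lintegral_rpow_le_rpow_lintegral_mul_measure_univ _ hmeas hθ₀ hθ₁
    _ = (ENNReal.ofReal η * ∫⁻ x, ENNReal.ofReal (f x ^ p) ∂μ) ^ θ *
          (ENNReal.ofReal η ^ (1 - θ) * μ Set.univ ^ (1 - θ)) := by
        rw [lintegral_smul_measure, Measure.smul_apply, smul_eq_mul, smul_eq_mul,
          ENNReal.mul_rpow_of_nonneg _ _ (sub_nonneg.2 hθ₁)]
    _ ≤ ENNReal.ofReal C ^ θ * (ENNReal.ofReal η ^ (1 - θ) * μ Set.univ ^ (1 - θ)) := by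
        gcongr
    _ = ENNReal.ofReal (C ^ θ * η ^ (1 - θ)) * μ Set.univ ^ (1 - θ) := by
        rw [ENNReal.ofReal_mul (rpow_nonneg hC θ), ENNReal.ofReal_rpow_of_nonneg hC hθ₀,
          ENNReal.ofReal_rpow_of_nonneg hη (sub_nonneg.2 hθ₁), mul_assoc]

end MeasureTheory

/-- On a finite measure space, if `η_n ∈ (0,1]`, `η_n → 0` and `η_n·∫ c_n^p dμ ≤ C` for
nonnegative measurable `c_n`, then `η_n·∫ c_n^(p−1/2) dμ → 0`; more precisely
`η_n·∫ c_n^(p−1/2) dμ ≤ C^((2p−1)/(2p))·η_n^(1/(2p))·μ(Ω)^(1/(2p))`. -/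
theorem vanishing_regularization {Ω : Type*} [MeasurableSpace Ω] (μ : Measure Ω)
    [IsFiniteMeasure μ] (p C : ℝ) (hp : 1 < p) (hC : 0 ≤ C)
    (c : ℕ → Ω → ℝ) (hmeas : ∀ n, Measurable (c n)) (hnonneg : ∀ n x, 0 ≤ c n x)
    (η : ℕ → ℝ) (hη : ∀ n, η n ∈ Set.Ioc (0 : ℝ) 1)
    (hη0 : Tendsto η atTop (nhds 0))
    (hbound : ∀ n, ENNReal.ofReal (η n) * ∫⁻ x, ENNReal.ofReal ((c n x) ^ p) ∂μ ≤
      ENNReal.ofReal C) :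
    Tendsto (fun n => ENNReal.ofReal (η n) *
        ∫⁻ x, ENNReal.ofReal ((c n x) ^ (p - 1/2)) ∂μ) atTop (nhds 0) ∧
    ∀ n, ENNReal.ofReal (η n) * ∫⁻ x, ENNReal.ofReal ((c n x) ^ (p - 1/2)) ∂μ ≤
      ENNReal.ofReal (C ^ ((2*p - 1)/(2*p)) * (η n) ^ (1/(2*p))) *
        (μ Set.univ) ^ ((1:ℝ)/(2*p)) := by
  have hp₀ : 0 < p := by linarith
  have hθ : (p - 1/2) / p = (2*p - 1)/(2*p) := by field_simp
  have h1θ : 1 - (2*p - 1)/(2*p) = 1/(2*p) := by field_simp; ring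
  have hbd : ∀ n, ENNReal.ofReal (η n) * ∫⁻ x, ENNReal.ofReal ((c n x) ^ (p - 1/2)) ∂μ ≤
      ENNReal.ofReal (C ^ ((2*p - 1)/(2*p)) * (η n) ^ (1/(2*p))) *
        (μ Set.univ) ^ ((1:ℝ)/(2*p)) := fun n => by
    simpa only [hθ, h1θ] using ofReal_mul_lintegral_rpow_le μ (hmeas n) (hnonneg n)
      (q := p - 1/2) (by linarith) (by linarith) hC (hη n).1.le (hbound n)
  refine ⟨tendsto_of_tendsto_of_tendsto_of_le_of_le tendsto_const_nhds ?_ (fun _ => zero_le) hbd,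
    hbd⟩
  have hr : (0 : ℝ) < 1/(2*p) := by positivity
  have hηr : Tendsto (fun n => C ^ ((2*p - 1)/(2*p)) * η n ^ (1/(2*p))) atTop (nhds 0) := by
    have := (hη0.rpow_const (Or.inr hr.le)).const_mul (C ^ ((2*p - 1)/(2*p)))
    rwa [zero_rpow hr.ne', mul_zero] at this
  simpa using ENNReal.Tendsto.mul_const (ENNReal.tendsto_ofReal hηr)
    (Or.inr (ENNReal.rpow_ne_top_of_nonneg hr.le (measure_ne_top μ Set.univ)))
end

section
/- (Ehrling's lemma) Let X, Y, Z be real normed vector spaces, let i : X → Y be a compact continuous linear operator, and let j : Y → Z be an injective continuous linear operator. Then for every ε > 0 there exists a constant C ≥ 0 such that for all x ∈ X: ‖i(x)‖_Y ≤ ε·‖x‖_X + C·‖j(i(x))‖_Z. -/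
open Filter

/-- Ehrling's lemma: if `i : X → Y` is a compact continuous linear operator (it maps bounded
sets to relatively compact sets) and `j : Y → Z` is an injective continuous linear operator,
then for every `ε > 0` there is `C ≥ 0` with `‖i x‖ ≤ ε‖x‖ + C‖j (i x)‖` for all `x`. -/
theorem ehrling_lemma {X Y Z : Type*}
    [NormedAddCommGroup X] [NormedSpace ℝ X]
    [NormedAddCommGroup Y] [NormedSpace ℝ Y]
    [NormedAddCommGroup Z] [NormedSpace ℝ Z]
    (i : X →L[ℝ] Y) (j : Y →L[ℝ] Z)
    (hi_compact : ∀ s : Set X, Bornology.IsBounded s → IsCompact (closure (i '' s)))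
    (hj_inj : Function.Injective j) :
    ∀ ε : ℝ, 0 < ε → ∃ C : ℝ, 0 ≤ C ∧ ∀ x : X, ‖i x‖ ≤ ε * ‖x‖ + C * ‖j (i x)‖ := by
  intro ε hε
  by_contra h
  push_neg at h
  -- For each n, pick xₙ with ε‖xₙ‖ + n‖j(i xₙ)‖ < ‖i xₙ‖
  choose x hx using fun n : ℕ => h n (Nat.cast_nonneg n)
  have hpos : ∀ n, 0 < ‖i (x n)‖ := by
    intro n
    have h1 := hx n
    nlinarith [norm_nonneg (x n), norm_nonneg (j (i (x n))),
      mul_nonneg (Nat.cast_nonneg n : (0:ℝ) ≤ n) (norm_nonneg (j (i (x n)))),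
      mul_nonneg hε.le (norm_nonneg (x n))]
  set u : ℕ → X := fun n => (‖i (x n)‖)⁻¹ • x n with hu
  have hnu : ∀ n, ‖u n‖ = (‖i (x n)‖)⁻¹ * ‖x n‖ := by
    intro n
    simp [hu, norm_smul, abs_of_nonneg (inv_nonneg.2 (norm_nonneg _))]
  have hiu : ∀ n, ‖i (u n)‖ = 1 := by
    intro n
    simp [hu, map_smul, norm_smul, abs_of_nonneg (inv_nonneg.2 (norm_nonneg _)),
      inv_mul_cancel₀ (hpos n).ne']
  have hju : ∀ n, ‖j (i (u n))‖ = (‖i (x n)‖)⁻¹ * ‖j (i (x n))‖ := by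
    intro n
    simp [hu, map_smul, norm_smul, abs_of_nonneg (inv_nonneg.2 (norm_nonneg _))]
  have hkey : ∀ n : ℕ, ε * ‖u n‖ + n * ‖j (i (u n))‖ < 1 := by
    intro n
    have h1 := hx n
    have h2 := hpos n
    have h3 := (mul_lt_mul_iff_right₀ (inv_pos.2 h2)).2 h1
    rw [inv_mul_cancel₀ h2.ne'] at h3
    calc ε * ‖u n‖ + n * ‖j (i (u n))‖
        = ‖i (x n)‖⁻¹ * (ε * ‖x n‖ + n * ‖j (i (x n))‖) := by rw [hnu, hju]; ring
      _ < 1 := h3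
  -- the uₙ are bounded by ε⁻¹
  have humem : ∀ n, u n ∈ Metric.closedBall (0 : X) ε⁻¹ := by
    intro n
    have h1 := hkey n
    have h2 : (0:ℝ) ≤ n * ‖j (i (u n))‖ :=
      mul_nonneg (Nat.cast_nonneg n) (norm_nonneg _)
    have h3 : ε * ‖u n‖ ≤ 1 := by linarith
    rw [Metric.mem_closedBall, dist_zero_right, inv_eq_one_div, le_div_iff₀ hε]
    nlinarith
  -- extract a convergent subsequence of (i ∘ u)
  have hK : IsCompact (closure (i '' Metric.closedBall (0 : X) ε⁻¹)) :=
    hi_compact _ Metric.isBounded_closedBall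
  have hmem : ∀ n, i (u n) ∈ closure (i '' Metric.closedBall (0 : X) ε⁻¹) := fun n =>
    subset_closure ⟨u n, humem n, rfl⟩
  obtain ⟨a, -, φ, hφ, hφt⟩ := hK.tendsto_subseq hmem
  -- ‖a‖ = 1
  have hna : ‖a‖ = 1 := by
    have h1 : Tendsto (fun n => ‖i (u (φ n))‖) atTop (nhds ‖a‖) :=
      (continuous_norm.tendsto a).comp hφt
    have h2 : Tendsto (fun n => ‖i (u (φ n))‖) atTop (nhds 1) := by
      simp only [hiu]; exact (tendsto_const_nhds : Tendsto (fun _ : ℕ => (1:ℝ)) atTop (nhds 1))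
    exact tendsto_nhds_unique h1 h2
  -- j a = 0
  have hja : j a = 0 := by
    have h1 : Tendsto (fun n => j (i (u (φ n)))) atTop (nhds (j a)) :=
      (j.continuous.tendsto a).comp hφt
    have h2 : Tendsto (fun n => ‖j (i (u (φ n)))‖) atTop (nhds 0) := by
      refine squeeze_zero' (g := fun n : ℕ => 1 / (n : ℝ))
        (Eventually.of_forall fun n => norm_nonneg _) ?_ tendsto_one_div_atTop_nhds_zero_nat
      filter_upwards [eventually_ge_atTop 1] with n hn
      have hφn : (1:ℕ) ≤ φ n := hn.trans (hφ.le_apply)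
      have hpos' : (0:ℝ) < (φ n : ℝ) := by exact_mod_cast hφn
      have hk := hkey (φ n)
      have h3 : (φ n : ℝ) * ‖j (i (u (φ n)))‖ < 1 := by
        nlinarith [mul_nonneg hε.le (norm_nonneg (u (φ n)))]
      have h4 : ‖j (i (u (φ n)))‖ ≤ 1 / (φ n : ℝ) := by
        rw [le_div_iff₀ hpos']; linarith
      calc ‖j (i (u (φ n)))‖ ≤ 1 / (φ n : ℝ) := h4
        _ ≤ 1 / (n : ℝ) := by
            apply one_div_le_one_div_of_le (by exact_mod_cast hn)
            exact_mod_cast hφ.le_apply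
    have h3 : Tendsto (fun n => j (i (u (φ n)))) atTop (nhds 0) := by
      rwa [tendsto_zero_iff_norm_tendsto_zero]
    exact tendsto_nhds_unique h1 h3
  have : a = 0 := hj_inj (by simpa using hja)
  rw [this, norm_zero] at hna
  exact one_ne_zero hna.symm
end

section
/- Let (Ω, μ) be a measure space, T > 0, t₀ ∈ [0, T), M ≥ 0, and let c : [0, T] → (Ω → [0,∞)) be a family of measurable functions such that ∫_{{c(t) ≥ 1}} c(t)·log c(t) dμ ≤ M for every t ∈ [0, T]. Suppose that for every integer k ≥ 2 there exists an integrable function v_k with ∫_Ω |min(c(t), k) − v_k| dμ → 0 as t → t₀⁺. Then there exists an integrable function v with ∫_Ω |c(t) − v| dμ → 0 as t → t₀⁺, i.e. c has a right-limit at t₀ in L¹(μ). -/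
/-!
The entropy bound gives `‖c t - min (c t) k‖₁ ≤ M / log k` uniformly in `t`, so the truncations
approximate `c` uniformly near `t₀`. Passing to the limit in the triangle inequality, the right
limits `v_k` of the truncations satisfy `‖v_k - v_j‖₁ ≤ M / log k + M / log j`; they form a
Cauchy sequence in `L¹`, whose limit `v` is the right limit of `c` by an `ε/2` argument.
-/

open MeasureTheory Real Filter
open scoped ENNReal Topology

section TruncationError

variable {Ω : Type*} [MeasurableSpace Ω] {μ : Measure Ω}

lemma eLpNorm_sub_one_eq_lintegral_ofReal_abs (f g : Ω → ℝ) :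
    eLpNorm (f - g) 1 μ = ∫⁻ x, ENNReal.ofReal |f x - g x| ∂μ := by
  simp only [eLpNorm_one_eq_lintegral_enorm, Pi.sub_apply, Real.enorm_eq_ofReal_abs]

/-- On `{f ≥ k}` we have `f - k ≤ f ≤ f log f / log k`. -/
lemma lintegral_abs_sub_min_le_entropy_div (f : Ω → ℝ) {k : ℝ} (hk : 1 < k) :
    ∫⁻ x, ENNReal.ofReal |f x - min (f x) k| ∂μ ≤
      (∫⁻ x in {x | 1 ≤ f x}, ENNReal.ofReal (f x * log (f x)) ∂μ) /
        ENNReal.ofReal (log k) := by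
  have hlogk : 0 < log k := log_pos hk
  have hpointwise : ∀ x, ENNReal.ofReal |f x - min (f x) k| ≤ {x | 1 ≤ f x}.indicator
      (fun x => ENNReal.ofReal (f x * log (f x)) / ENNReal.ofReal (log k)) x := by
    intro x
    rcases le_or_gt (f x) k with hx | hx
    · simp [min_eq_left hx]
    have hfx : x ∈ {x | 1 ≤ f x} := hk.le.trans hx.le
    rw [Set.indicator_of_mem hfx, min_eq_right hx.le, ← ENNReal.ofReal_div_of_pos hlogk,
      abs_of_pos (sub_pos.2 hx)]
    refine ENNReal.ofReal_le_ofReal ((le_div_iff₀ hlogk).2 ?_)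
    calc (f x - k) * log k ≤ f x * log k := by nlinarith
      _ ≤ f x * log (f x) := by gcongr; linarith
  calc ∫⁻ x, ENNReal.ofReal |f x - min (f x) k| ∂μ
      ≤ ∫⁻ x, {x | 1 ≤ f x}.indicator
          (fun x => ENNReal.ofReal (f x * log (f x)) / ENNReal.ofReal (log k)) x ∂μ :=
        lintegral_mono hpointwise
    _ ≤ ∫⁻ x in {x | 1 ≤ f x}, ENNReal.ofReal (f x * log (f x)) / ENNReal.ofReal (log k) ∂μ :=
        lintegral_indicator_le _ _
    _ = _ := by
        simp only [div_eq_mul_inv]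
        exact lintegral_mul_const' _ _ (ENNReal.inv_ne_top.2 (ENNReal.ofReal_pos.2 hlogk).ne')

end TruncationError

section ApproximateLimits

variable {α Ω E : Type*} [MeasurableSpace Ω] {μ : Measure Ω} [NormedAddCommGroup E]
  {p : ℝ≥0∞} {l : Filter α}

lemma eLpNorm_sub_le_eLpNorm_sub_add_eLpNorm_sub {f g h : Ω → E}
    (hf : AEStronglyMeasurable f μ) (hg : AEStronglyMeasurable g μ)
    (hh : AEStronglyMeasurable h μ) (hp : 1 ≤ p) :
    eLpNorm (f - h) p μ ≤ eLpNorm (f - g) p μ + eLpNorm (g - h) p μ := by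
  simpa only [sub_add_sub_cancel] using eLpNorm_add_le (hf.sub hg) (hg.sub hh) hp

lemma eLpNorm_sub_le_of_tendsto [l.NeBot] (hp : 1 ≤ p) {F G : α → Ω → E} {a b : Ω → E}
    {C : ℝ≥0∞} (hF : ∀ᶠ t in l, AEStronglyMeasurable (F t) μ)
    (hG : ∀ᶠ t in l, AEStronglyMeasurable (G t) μ)
    (ha : AEStronglyMeasurable a μ) (hb : AEStronglyMeasurable b μ)
    (hFa : Tendsto (fun t => eLpNorm (F t - a) p μ) l (𝓝 0))
    (hGb : Tendsto (fun t => eLpNorm (G t - b) p μ) l (𝓝 0))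
    (hFG : ∀ᶠ t in l, eLpNorm (F t - G t) p μ ≤ C) :
    eLpNorm (a - b) p μ ≤ C := by
  have hlim : Tendsto (fun t => eLpNorm (F t - a) p μ + C + eLpNorm (G t - b) p μ) l
      (𝓝 C) := by
    simpa using (hFa.add tendsto_const_nhds).add hGb
  refine ge_of_tendsto hlim ?_
  filter_upwards [hF, hG, hFG] with t hFt hGt hFGt
  calc eLpNorm (a - b) p μ
      ≤ eLpNorm (a - F t) p μ + (eLpNorm (F t - G t) p μ + eLpNorm (G t - b) p μ) :=
        (eLpNorm_sub_le_eLpNorm_sub_add_eLpNorm_sub ha hFt hb hp).trans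
          (by gcongr; exact eLpNorm_sub_le_eLpNorm_sub_add_eLpNorm_sub hFt hGt hb hp)
    _ ≤ eLpNorm (F t - a) p μ + C + eLpNorm (G t - b) p μ := by
        rw [eLpNorm_sub_comm, ← add_assoc]; gcongr

lemma exists_memLp_tendsto_eLpNorm_sub_of_le_add [Fact (1 ≤ p)] [CompleteSpace E]
    {w : ℕ → Ω → E} (hw : ∀ k, MemLp (w k) p μ) {ε : ℕ → ℝ≥0∞}
    (hε : Tendsto ε atTop (𝓝 0)) (hdist : ∀ m n, eLpNorm (w m - w n) p μ ≤ ε m + ε n) :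
    ∃ v, MemLp v p μ ∧ Tendsto (fun k => eLpNorm (w k - v) p μ) atTop (𝓝 0) := by
  set W : ℕ → Lp E p μ := fun k => (hw k).toLp (w k)
  have hW : CauchySeq W := by
    refine EMetric.cauchySeq_iff'.2 fun δ hδ => ?_
    obtain ⟨N, hN⟩ :=
      (hε.eventually (gt_mem_nhds (ENNReal.half_pos hδ.ne'))).exists_forall_of_atTop
    refine ⟨N, fun n hn => ?_⟩
    calc edist (W n) (W N) = eLpNorm (w n - w N) p μ := Lp.edist_toLp_toLp _ _ _ _
      _ ≤ ε n + ε N := hdist n N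
      _ < δ / 2 + δ / 2 := ENNReal.add_lt_add (hN n hn) (hN N le_rfl)
      _ = δ := ENNReal.add_halves δ
  obtain ⟨V, hV⟩ := cauchySeq_tendsto_of_complete hW
  refine ⟨V, Lp.memLp V, (Lp.tendsto_Lp_iff_tendsto_eLpNorm'' w hw V (Lp.memLp V)).1 ?_⟩
  rwa [Lp.toLp_coeFn]

/-- Moore–Osgood in `Lᵖ`. -/
theorem exists_memLp_tendsto_eLpNorm_sub_of_approx [l.NeBot] [Fact (1 ≤ p)] [CompleteSpace E]
    {F : α → Ω → E} {G : ℕ → α → Ω → E} {w : ℕ → Ω → E} {ε : ℕ → ℝ≥0∞}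
    (hF : ∀ᶠ t in l, AEStronglyMeasurable (F t) μ)
    (hG : ∀ k, ∀ᶠ t in l, AEStronglyMeasurable (G k t) μ)
    (hw : ∀ k, MemLp (w k) p μ) (hε : Tendsto ε atTop (𝓝 0))
    (hFG : ∀ k, ∀ᶠ t in l, eLpNorm (F t - G k t) p μ ≤ ε k)
    (hGw : ∀ k, Tendsto (fun t => eLpNorm (G k t - w k) p μ) l (𝓝 0)) :
    ∃ v, MemLp v p μ ∧ Tendsto (fun t => eLpNorm (F t - v) p μ) l (𝓝 0) := by
  have hp : 1 ≤ p := Fact.out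
  have hdist (m n : ℕ) : eLpNorm (w m - w n) p μ ≤ ε m + ε n := by
    refine eLpNorm_sub_le_of_tendsto hp (hG m) (hG n) (hw m).1 (hw n).1 (hGw m) (hGw n) ?_
    filter_upwards [hF, hG m, hG n, hFG m, hFG n] with t hFt hGmt hGnt hm hn
    calc eLpNorm (G m t - G n t) p μ ≤ eLpNorm (G m t - F t) p μ + eLpNorm (F t - G n t) p μ :=
          eLpNorm_sub_le_eLpNorm_sub_add_eLpNorm_sub hGmt hFt hGnt hp
      _ ≤ ε m + ε n := by rw [eLpNorm_sub_comm]; gcongr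
  obtain ⟨v, hv, hwv⟩ := exists_memLp_tendsto_eLpNorm_sub_of_le_add hw hε hdist
  refine ⟨v, hv, ENNReal.tendsto_nhds_zero.2 fun δ hδ => ?_⟩
  obtain ⟨k, hk⟩ := (by simpa using hε.add hwv :
    Tendsto (fun k => ε k + eLpNorm (w k - v) p μ) atTop (𝓝 0)).eventually
      (gt_mem_nhds (ENNReal.half_pos hδ.ne')) |>.exists
  filter_upwards [hF, hG k, hFG k, (hGw k).eventually (gt_mem_nhds (ENNReal.half_pos hδ.ne'))]
    with t hFt hGt hFGt hGwt
  calc eLpNorm (F t - v) p μ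
      ≤ eLpNorm (F t - G k t) p μ + (eLpNorm (G k t - w k) p μ + eLpNorm (w k - v) p μ) :=
        (eLpNorm_sub_le_eLpNorm_sub_add_eLpNorm_sub hFt hGt hv.1 hp).trans
          (by gcongr; exact eLpNorm_sub_le_eLpNorm_sub_add_eLpNorm_sub hGt (hw k).1 hv.1 hp)
    _ ≤ eLpNorm (G k t - w k) p μ + (ε k + eLpNorm (w k - v) p μ) := by
        rw [add_left_comm]; gcongr
    _ ≤ δ / 2 + δ / 2 := add_le_add hGwt.le hk.le
    _ = δ := ENNReal.add_halves δ

end ApproximateLimits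

theorem right_limit_from_truncations_general {Ω : Type*} [MeasurableSpace Ω] (μ : Measure Ω)
    (T : ℝ) (t₀ : ℝ) (ht₀ : t₀ ∈ Set.Ico 0 T) (M : ℝ)
    (c : ℝ → Ω → ℝ)
    (hmeas : ∀ t ∈ Set.Icc 0 T, Measurable (c t))
    (hent : ∀ t ∈ Set.Icc 0 T,
      ∫⁻ x in {x | 1 ≤ c t x}, ENNReal.ofReal (c t x * Real.log (c t x)) ∂μ ≤
        ENNReal.ofReal M)
    (htrunc : ∀ k : ℕ, 2 ≤ k → ∃ v : Ω → ℝ, Integrable v μ ∧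
      Tendsto (fun t => ∫⁻ x, ENNReal.ofReal |min (c t x) (k : ℝ) - v x| ∂μ)
        (nhdsWithin t₀ (Set.Ioi t₀)) (nhds 0)) :
    ∃ v : Ω → ℝ, Integrable v μ ∧
      Tendsto (fun t => ∫⁻ x, ENNReal.ofReal |c t x - v x| ∂μ)
        (nhdsWithin t₀ (Set.Ioi t₀)) (nhds 0) := by
  have hIcc : ∀ᶠ t in 𝓝[>] t₀, t ∈ Set.Icc 0 T :=
    Filter.mem_of_superset (Ioo_mem_nhdsGT ht₀.2) fun t ht => ⟨ht₀.1.trans ht.1.le, ht.2.le⟩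
  choose w hw hcw using fun k : ℕ => htrunc (k + 2) (by omega)
  have hlog : Tendsto (fun k : ℕ => ENNReal.ofReal (log ((k + 2 : ℕ) : ℝ))) atTop (𝓝 ∞) :=
    ENNReal.tendsto_ofReal_atTop.comp <| tendsto_log_atTop.comp <|
      tendsto_natCast_atTop_atTop.comp (tendsto_add_atTop_nat 2)
  have hε : Tendsto (fun k : ℕ => ENNReal.ofReal M / ENNReal.ofReal (log ((k + 2 : ℕ) : ℝ)))
      atTop (𝓝 0) := by
    simpa using ENNReal.Tendsto.const_div hlog (.inr ENNReal.ofReal_ne_top)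
  have hcG (k : ℕ) : ∀ᶠ t in 𝓝[>] t₀,
      eLpNorm (c t - fun x => min (c t x) ((k + 2 : ℕ) : ℝ)) 1 μ ≤
        ENNReal.ofReal M / ENNReal.ofReal (log ((k + 2 : ℕ) : ℝ)) := by
    filter_upwards [hIcc] with t ht
    rw [eLpNorm_sub_one_eq_lintegral_ofReal_abs]
    exact (lintegral_abs_sub_min_le_entropy_div _ (by norm_cast; omega)).trans
      (ENNReal.div_le_div_right (hent t ht) _)
  obtain ⟨v, hv, hcv⟩ := exists_memLp_tendsto_eLpNorm_sub_of_approx (p := 1)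
    (G := fun k t x => min (c t x) ((k + 2 : ℕ) : ℝ))
    (hIcc.mono fun t ht => (hmeas t ht).aestronglyMeasurable)
    (fun k => hIcc.mono fun t ht => ((hmeas t ht).min measurable_const).aestronglyMeasurable)
    (fun k => memLp_one_iff_integrable.2 (hw k)) hε hcG
    (by simpa only [eLpNorm_sub_one_eq_lintegral_ofReal_abs] using hcw)
  exact ⟨v, memLp_one_iff_integrable.1 hv,
    by simpa only [eLpNorm_sub_one_eq_lintegral_ofReal_abs] using hcv⟩

/-- Right-limits in `L¹` from right-limits of all truncations plus a uniform entropy bound: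
if `∫_{{c(t) ≥ 1}} c(t)·log c(t) dμ ≤ M` for all `t ∈ [0,T]`, and for every integer `k ≥ 2`
the truncation `min(c(t), k)` has a right-limit `v_k` in `L¹(μ)` as `t → t₀⁺`, then `c`
itself has a right-limit in `L¹(μ)` as `t → t₀⁺`. -/
theorem right_limit_from_truncations {Ω : Type*} [MeasurableSpace Ω] (μ : Measure Ω)
    (T : ℝ) (hT : 0 < T) (t₀ : ℝ) (ht₀ : t₀ ∈ Set.Ico 0 T) (M : ℝ) (hM : 0 ≤ M)
    (c : ℝ → Ω → ℝ)
    (hmeas : ∀ t ∈ Set.Icc 0 T, Measurable (c t))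
    (hnonneg : ∀ t ∈ Set.Icc 0 T, ∀ x, 0 ≤ c t x)
    (hent : ∀ t ∈ Set.Icc 0 T,
      ∫⁻ x in {x | 1 ≤ c t x}, ENNReal.ofReal (c t x * Real.log (c t x)) ∂μ ≤
        ENNReal.ofReal M)
    (htrunc : ∀ k : ℕ, 2 ≤ k → ∃ v : Ω → ℝ, Integrable v μ ∧
      Tendsto (fun t => ∫⁻ x, ENNReal.ofReal |min (c t x) (k : ℝ) - v x| ∂μ)
        (nhdsWithin t₀ (Set.Ioi t₀)) (nhds 0)) :
    ∃ v : Ω → ℝ, Integrable v μ ∧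
      Tendsto (fun t => ∫⁻ x, ENNReal.ofReal |c t x - v x| ∂μ)
        (nhdsWithin t₀ (Set.Ioi t₀)) (nhds 0) :=
  right_limit_from_truncations_general μ T t₀ ht₀ M c hmeas hent htrunc
end
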